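/- arXiv:1908.04569 — 6 statements merged into one kernel-verified Lean document; each statement's English description precedes it below -/
import Mathlib

section
/- Fix α ∈ (0,1), y ∈ ℝ, M > 0, δ > 0 and C ≥ 0. Let U ⊆ ℝ^k and let g^q : ℝ^k → ℝ and g^e : ℝ^k → ℝ be functions that are Lipschitz with constant C on U and satisfy |g^q(θ)| ≤ M and g^e(θ) ≤ −δ for all θ ∈ U. Then there exists a constant L ≥ 0 (depending on α, y, M, δ, C) such that the map θ ↦ ρ_α(y, g^q(θ), g^e(θ)) is Lipschitz with constant L on U. -/
/-- The FZ0 joint loss function for the pair (VaR, ES) at level `α`. -/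
noncomputable def rho (α y q e : ℝ) : ℝ :=
  -(1 / e) * (e - q + (q - y) * (if y ≤ q then 1 else 0) / α) + Real.log (-e)

lemma rho_eq (α y q e : ℝ) (hα : α ≠ 0) (he : e ≠ 0) :
    rho α y q e = -1 + q / e - max (q - y) 0 / (α * e) + Real.log (-e) := by
  unfold rho
  rcases le_or_gt y q with h | h
  · rw [if_pos h, max_eq_left (by linarith)]
    field_simp
    ring
  · rw [if_neg (not_le.mpr h), max_eq_right (by linarith)]
    field_simp
    ring

lemma div_diff_bound (A δ a b e e' : ℝ) (hδ : 0 < δ) (hb : |b| ≤ A)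
    (he : e ≤ -δ) (he' : e' ≤ -δ) :
    |a / e - b / e'| ≤ |a - b| / δ + A * |e - e'| / δ ^ 2 := by
  have he0 : e ≠ 0 := by nlinarith
  have he0' : e' ≠ 0 := by nlinarith
  have habs : δ ≤ |e| := by rw [abs_of_neg (by linarith)]; linarith
  have habs' : δ ≤ |e'| := by rw [abs_of_neg (by linarith)]; linarith
  have key : a / e - b / e' = (a - b) / e + b * (e' - e) / (e * e') := by
    field_simp; ring
  rw [key]
  have h1 : |(a - b) / e| ≤ |a - b| / δ := by
    rw [abs_div]
    apply div_le_div_of_nonneg_left (abs_nonneg _) hδ habs |>.trans_eq rfl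
  have h2 : |b * (e' - e) / (e * e')| ≤ A * |e - e'| / δ ^ 2 := by
    rw [abs_div, abs_mul, abs_mul]
    have hee : δ ^ 2 ≤ |e| * |e'| := by nlinarith [abs_nonneg e, abs_nonneg e']
    have hnum : |b| * |e' - e| ≤ A * |e - e'| := by
      rw [abs_sub_comm e' e]
      exact mul_le_mul_of_nonneg_right hb (abs_nonneg _)
    calc |b| * |e' - e| / (|e| * |e'|) ≤ |b| * |e' - e| / δ ^ 2 := by
          apply div_le_div_of_nonneg_left (by positivity) (by positivity) hee
      _ ≤ A * |e - e'| / δ ^ 2 := by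
          apply div_le_div_of_nonneg_right hnum (by positivity) |>.trans_eq rfl
  calc |(a - b) / e + b * (e' - e) / (e * e')|
      ≤ |(a - b) / e| + |b * (e' - e) / (e * e')| := abs_add_le _ _
    _ ≤ |a - b| / δ + A * |e - e'| / δ ^ 2 := add_le_add h1 h2

lemma log_lip (δ x z : ℝ) (hδ : 0 < δ) (hx : δ ≤ x) (hz : δ ≤ z) :
    |Real.log x - Real.log z| ≤ |x - z| / δ := by
  have hx0 : 0 < x := lt_of_lt_of_le hδ hx
  have hz0 : 0 < z := lt_of_lt_of_le hδ hz
  have key : ∀ u v : ℝ, δ ≤ u → δ ≤ v → Real.log u - Real.log v ≤ |u - v| / δ := by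
    intro u v hu hv
    have hu0 : 0 < u := lt_of_lt_of_le hδ hu
    have hv0 : 0 < v := lt_of_lt_of_le hδ hv
    have := Real.log_le_sub_one_of_pos (x := u / v) (by positivity)
    rw [Real.log_div hu0.ne' hv0.ne'] at this
    have h2 : u / v - 1 = (u - v) / v := by field_simp
    have h3 : (u - v) / v ≤ |u - v| / δ := by
      apply div_le_div₀ (abs_nonneg _) (le_abs_self _) hδ hv
    linarith
  rw [abs_sub_le_iff]
  refine ⟨key x z hx hz, ?_⟩
  rw [abs_sub_comm]
  exact key z x hz hx

lemma rho_diff_bound (α y M δ : ℝ) (hα : 0 < α) (hM : 0 < M) (hδ : 0 < δ)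
    (q q' e e' : ℝ) (hq : |q| ≤ M) (hq' : |q'| ≤ M) (he : e ≤ -δ) (he' : e' ≤ -δ) :
    |rho α y q e - rho α y q' e'| ≤
      ((1 + 1/α) / δ + (M + (M + |y|) / α + 1) / δ ^ 2 + 1/δ) * (|q - q'| + |e - e'|) := by
  have he0 : e ≠ 0 := by nlinarith
  have he0' : e' ≠ 0 := by nlinarith
  rw [rho_eq α y q e hα.ne' he0, rho_eq α y q' e' hα.ne' he0']
  set m := max (q - y) 0 with hm
  set m' := max (q' - y) 0 with hm'
  have hmabs : |m - m'| ≤ |q - q'| := by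
    have := abs_max_sub_max_le_abs (q - y) (q' - y) 0
    simpa [hm, hm'] using this
  have hm'bd : |m'| ≤ M + |y| := by
    rw [abs_of_nonneg (le_max_right _ _)]
    rcases le_or_gt (q' - y) 0 with h | h
    · simp [hm', max_eq_right h]; positivity
    · rw [hm', max_eq_left h.le]
      have : |q' - y| ≤ |q'| + |y| := abs_sub _ _
      calc q' - y ≤ |q' - y| := le_abs_self _
        _ ≤ |q'| + |y| := this
        _ ≤ M + |y| := by linarith
  -- term 1: q/e - q'/e'
  have h1 := div_diff_bound M δ q q' e e' hδ hq' he he'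
  -- term 2: m/(αe) - m'/(αe')
  have hαe : α * e ≤ -(α * δ) := by nlinarith
  have hαe' : α * e' ≤ -(α * δ) := by nlinarith
  have h2 := div_diff_bound (M + |y|) (α * δ) m m' (α * e) (α * e')
    (by positivity) hm'bd hαe hαe'
  have h2' : |m / (α * e) - m' / (α * e')| ≤
      |q - q'| / (α * δ) + (M + |y|) * |e - e'| / (α * δ ^ 2) := by
    have hee : |α * e - α * e'| = α * |e - e'| := by
      rw [← mul_sub, abs_mul, abs_of_pos hα]
    calc |m / (α * e) - m' / (α * e')|
        ≤ |m - m'| / (α * δ) + (M + |y|) * |α * e - α * e'| / (α * δ) ^ 2 := h2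
      _ ≤ |q - q'| / (α * δ) + (M + |y|) * (α * |e - e'|) / (α * δ) ^ 2 := by
          rw [hee]; gcongr
      _ = |q - q'| / (α * δ) + (M + |y|) * |e - e'| / (α * δ ^ 2) := by
          field_simp
  -- term 3: log
  have h3 : |Real.log (-e) - Real.log (-e')| ≤ |e - e'| / δ := by
    have := log_lip δ (-e) (-e') hδ (by linarith) (by linarith)
    have heq : |(-e) - (-e')| = |e - e'| := by rw [← abs_neg]; ring_nf
    rwa [heq] at this
  have decomp : (-1 + q / e - m / (α * e) + Real.log (-e)) -
      (-1 + q' / e' - m' / (α * e') + Real.log (-e')) =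
      (q / e - q' / e') - (m / (α * e) - m' / (α * e')) +
      (Real.log (-e) - Real.log (-e')) := by ring
  rw [decomp]
  have habc : |(q / e - q' / e') - (m / (α * e) - m' / (α * e')) +
      (Real.log (-e) - Real.log (-e'))| ≤
      |q / e - q' / e'| + |m / (α * e) - m' / (α * e')| +
      |Real.log (-e) - Real.log (-e')| := by
    calc _ ≤ |(q / e - q' / e') - (m / (α * e) - m' / (α * e'))| +
        |Real.log (-e) - Real.log (-e')| := abs_add_le _ _
      _ ≤ _ := by gcongr; exact abs_sub _ _
  have hq0 : 0 ≤ |q - q'| := abs_nonneg _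
  have he0'' : 0 ≤ |e - e'| := abs_nonneg _
  have hy0 : 0 ≤ |y| := abs_nonneg _
  have hα1 : 0 < 1/α := by positivity
  have hδ2 : 0 < δ^2 := by positivity
  calc _ ≤ |q / e - q' / e'| + |m / (α * e) - m' / (α * e')| +
        |Real.log (-e) - Real.log (-e')| := habc
    _ ≤ (|q - q'| / δ + M * |e - e'| / δ ^ 2) +
        (|q - q'| / (α * δ) + (M + |y|) * |e - e'| / (α * δ ^ 2)) +
        |e - e'| / δ := add_le_add (add_le_add h1 h2') h3
    _ ≤ ((1 + 1/α) / δ + (M + (M + |y|) / α + 1) / δ ^ 2 + 1/δ) *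
        (|q - q'| + |e - e'|) := by
        have p1 : 0 ≤ ((M + (M + |y|) / α + 1) / δ ^ 2 + 1/δ) * |q - q'| := by positivity
        have p2 : 0 ≤ ((1 + 1/α) / δ + 1/δ^2) * |e - e'| := by positivity
        have key : ((1 + 1/α) / δ + (M + (M + |y|) / α + 1) / δ ^ 2 + 1/δ) *
            (|q - q'| + |e - e'|)
            = (|q - q'| / δ + M * |e - e'| / δ ^ 2 +
              (|q - q'| / (α * δ) + (M + |y|) * |e - e'| / (α * δ ^ 2)) + |e - e'| / δ)
              + ((M + (M + |y|) / α + 1) / δ ^ 2 + 1/δ) * |q - q'|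
              + ((1 + 1/α) / δ + 1/δ^2) * |e - e'| := by
          field_simp
          ring
        linarith

/-- If the quantile and ES link functions `g^q, g^e : ℝ^k → ℝ` are Lipschitz with
constant `C` on `U`, with `|g^q| ≤ M` and `g^e ≤ -δ` on `U`, then
`θ ↦ ρ_α(y, g^q(θ), g^e(θ))` is Lipschitz (with some constant `L`) on `U`. -/
theorem fz0_comp_lipschitzOn (α y M δ C : ℝ) (hα : α ∈ Set.Ioo (0 : ℝ) 1)
    (hM : 0 < M) (hδ : 0 < δ) (hC : 0 ≤ C)
    (k : ℕ) (U : Set (EuclideanSpace ℝ (Fin k)))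
    (gq ge : EuclideanSpace ℝ (Fin k) → ℝ)
    (hgq : LipschitzOnWith (Real.toNNReal C) gq U)
    (hge : LipschitzOnWith (Real.toNNReal C) ge U)
    (hq_bd : ∀ θ ∈ U, |gq θ| ≤ M) (he_bd : ∀ θ ∈ U, ge θ ≤ -δ) :
    ∃ L : NNReal, LipschitzOnWith L (fun θ => rho α y (gq θ) (ge θ)) U := by
  obtain ⟨hα0, hα1⟩ := hα
  set K := (1 + 1/α) / δ + (M + (M + |y|) / α + 1) / δ ^ 2 + 1/δ with hK
  have hK0 : 0 ≤ K := by positivity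
  refine ⟨Real.toNNReal (2 * K * C), ?_⟩
  apply LipschitzOnWith.of_dist_le_mul
  intro θ hθ θ' hθ'
  have hbd := rho_diff_bound α y M δ hα0 hM hδ (gq θ) (gq θ') (ge θ) (ge θ')
    (hq_bd θ hθ) (hq_bd θ' hθ') (he_bd θ hθ) (he_bd θ' hθ')
  have hq := hgq.dist_le_mul θ hθ θ' hθ'
  have he := hge.dist_le_mul θ hθ θ' hθ'
  rw [Real.dist_eq] at hq he ⊢
  rw [Real.coe_toNNReal C hC] at hq he
  rw [Real.coe_toNNReal _ (by positivity)]
  calc |rho α y (gq θ) (ge θ) - rho α y (gq θ') (ge θ')|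
      ≤ K * (|gq θ - gq θ'| + |ge θ - ge θ'|) := hbd
    _ ≤ K * (C * dist θ θ' + C * dist θ θ') := by
        apply mul_le_mul_of_nonneg_left (add_le_add hq he) hK0
    _ = 2 * K * C * dist θ θ' := by ring
end

section
/- Let (Ω, F, P) be a probability space, let Y be an integrable real random variable, let α ∈ (0,1), and let q ∈ ℝ satisfy P(Y ≤ q) = α. Define e := α^{-1}·E[Y·1{Y≤q}] and assume e < 0. Then the identification function has zero expectation at (q,e): E[ −(1{Y≤q} − α)/(α·e) ] = 0 and E[ (e − q + (q−Y)·1{Y≤q}/α)/e² ] = 0. -/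
open MeasureTheory

/-- If `P(Y ≤ q) = α` and `e = α⁻¹·E[Y·1{Y≤q}] < 0`, then the identification
function of the FZ0 loss has zero expectation at `(q,e)`. -/
theorem psi_zero_expectation {Ω : Type*} [MeasurableSpace Ω] (P : Measure Ω)
    [IsProbabilityMeasure P] (Y : Ω → ℝ) (hY : Integrable Y P)
    (α : ℝ) (hα : α ∈ Set.Ioo (0 : ℝ) 1) (q : ℝ)
    (hq : P {ω | Y ω ≤ q} = ENNReal.ofReal α)
    (e : ℝ) (he_def : e = α⁻¹ * ∫ ω, Y ω * (if Y ω ≤ q then 1 else 0) ∂P)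
    (he : e < 0) :
    (∫ ω, -((if Y ω ≤ q then (1 : ℝ) else 0) - α) / (α * e) ∂P) = 0 ∧
    (∫ ω, (e - q + (q - Y ω) * (if Y ω ≤ q then (1 : ℝ) else 0) / α) / e ^ 2 ∂P) = 0 := by
  obtain ⟨hαpos, hα1⟩ := hα
  have hαne : α ≠ 0 := ne_of_gt hαpos
  set f : Ω → ℝ := fun ω => if Y ω ≤ q then (1 : ℝ) else 0 with hf_def
  obtain ⟨g, hg, hYg⟩ := hY.aestronglyMeasurable
  have hsg : MeasurableSet {ω | g ω ≤ q} := hg.measurable measurableSet_Iic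
  have hset : {ω | Y ω ≤ q} =ᵐ[P] {ω | g ω ≤ q} := by
    filter_upwards [hYg] with ω h
    change (Y ω ≤ q) = (g ω ≤ q)
    rw [h]
  have hPg : P {ω | g ω ≤ q} = ENNReal.ofReal α := by
    rw [← measure_congr hset]; exact hq
  -- measurability of f
  have hf_meas : AEStronglyMeasurable f P := by
    have : f =ᵐ[P] Set.indicator {ω | g ω ≤ q} (fun _ => (1 : ℝ)) := by
      filter_upwards [hYg] with ω h
      simp [hf_def, Set.indicator, Set.mem_setOf_eq, h]
    exact (StronglyMeasurable.aestronglyMeasurable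
      ((stronglyMeasurable_const).indicator hsg)).congr this.symm
  have hf_int : Integrable f P := by
    refine ⟨hf_meas, ?_⟩
    apply HasFiniteIntegral.mono' (integrable_const (1 : ℝ)).hasFiniteIntegral
    filter_upwards with ω
    by_cases h : Y ω ≤ q <;> simp [hf_def, h]
  have hIf : (∫ ω, f ω ∂P) = α := by
    have h1 : (∫ ω, f ω ∂P) = ∫ ω, Set.indicator {ω | g ω ≤ q} (fun _ => (1 : ℝ)) ω ∂P := by
      apply integral_congr_ae
      filter_upwards [hYg] with ω h
      simp [hf_def, Set.indicator, Set.mem_setOf_eq, h]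
    rw [h1, integral_indicator_const (1 : ℝ) hsg, measureReal_def, hPg, smul_eq_mul, mul_one,
      ENNReal.toReal_ofReal hαpos.le]
  have hYf_int : Integrable (fun ω => Y ω * f ω) P := by
    refine Integrable.mono hY (hY.aestronglyMeasurable.mul hf_meas) ?_
    filter_upwards with ω
    by_cases h : Y ω ≤ q <;> simp [hf_def, h, abs_nonneg]
  have hIYf : (∫ ω, Y ω * f ω ∂P) = α * e := by
    rw [he_def, ← mul_assoc, mul_inv_cancel₀ hαne, one_mul]
  constructor
  · have h1 : (∫ ω, -((f ω) - α) / (α * e) ∂P) = (∫ ω, (α - f ω) ∂P) / (α * e) := by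
      rw [← integral_div]
      congr 1; funext ω; ring
    calc (∫ ω, -((if Y ω ≤ q then (1 : ℝ) else 0) - α) / (α * e) ∂P)
        = (∫ ω, (α - f ω) ∂P) / (α * e) := h1
      _ = 0 := by
          rw [integral_sub (integrable_const α) hf_int, hIf, integral_const]
          simp
  · have h1 : (∫ ω, (e - q + (q - Y ω) * f ω / α) / e ^ 2 ∂P)
        = (∫ ω, (e - q + (q - Y ω) * f ω / α) ∂P) / e ^ 2 := integral_div _ _
    rw [h1]
    have h2 : (∫ ω, (e - q + (q - Y ω) * f ω / α) ∂P) = 0 := by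
      have heq : ∀ ω, e - q + (q - Y ω) * f ω / α
          = (e - q) + (q * f ω - Y ω * f ω) / α := by
        intro ω; ring
      have hint : Integrable (fun ω => (q * f ω - Y ω * f ω) / α) P :=
        ((hf_int.const_mul q).sub hYf_int).div_const α
      calc (∫ ω, (e - q + (q - Y ω) * f ω / α) ∂P)
          = ∫ ω, ((e - q) + (q * f ω - Y ω * f ω) / α) ∂P := by
            apply integral_congr_ae; filter_upwards with ω; exact heq ω
        _ = (e - q) + (∫ ω, (q * f ω - Y ω * f ω) ∂P) / α := by
            rw [integral_add (integrable_const _) hint, integral_const, integral_div]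
            simp
        _ = 0 := by
            rw [integral_sub (hf_int.const_mul q) hYf_int, integral_const_mul, hIf, hIYf]
            field_simp
            ring
    rw [h2, zero_div]
end

section
/- Let μ be a probability measure on ℝ with no atoms (μ({x}) = 0 for every x) such that the identity function is μ-integrable. Fix α ∈ (0,1) and e < 0. Then for every q ∈ ℝ, the map s ↦ ∫ ρ_α(y, s, e) dμ(y) is differentiable at q with derivative −(1/(α·e))·(F(q) − α), where F(q) := μ((−∞, q]). -/
open MeasureTheory

open Set Filter Topology

namespace FZ0Aux

noncomputable def F (μ : Measure ℝ) (t : ℝ) : ℝ := (μ (Set.Iic t)).toReal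

lemma F_mono (μ : Measure ℝ) [IsProbabilityMeasure μ] : Monotone (F μ) := by
  intro a b hab
  exact ENNReal.toReal_mono (measure_ne_top μ _) (measure_mono (Iic_subset_Iic.2 hab))

lemma continuousAt_F (μ : Measure ℝ) [IsProbabilityMeasure μ]
    (hatoms : ∀ x : ℝ, μ {x} = 0) (q : ℝ) : ContinuousAt (F μ) q := by
  have hF : F μ = ⇑(ProbabilityTheory.cdf μ) := by
    funext t; rw [F, ProbabilityTheory.cdf_eq_real]; rfl
  rw [hF]
  have hmono := ProbabilityTheory.monotone_cdf μ
  rw [hmono.continuousAt_iff_leftLim_eq_rightLim, StieltjesFunction.rightLim_eq]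
  have hsing := (ProbabilityTheory.cdf μ).measure_singleton q
  rw [ProbabilityTheory.measure_cdf, hatoms q] at hsing
  have h1 : ProbabilityTheory.cdf μ q -
      Function.leftLim (⇑(ProbabilityTheory.cdf μ)) q ≤ 0 :=
    ENNReal.ofReal_eq_zero.mp hsing.symm
  have h2 := hmono.leftLim_le (le_refl q)
  linarith

noncomputable def g (μ : Measure ℝ) (s : ℝ) : ℝ := ∫ y, max (s - y) 0 ∂μ

lemma integrable_part (μ : Measure ℝ) [IsProbabilityMeasure μ]
    (hint : Integrable (fun x : ℝ => x) μ) (s : ℝ) :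
    Integrable (fun y => max (s - y) 0) μ :=
  ((integrable_const s).sub hint).pos_part

lemma g_diff_bounds (μ : Measure ℝ) [IsProbabilityMeasure μ]
    (hint : Integrable (fun x : ℝ => x) μ) {q t : ℝ} (h : q ≤ t) :
    (t - q) * F μ q ≤ g μ t - g μ q ∧ g μ t - g μ q ≤ (t - q) * F μ t := by
  have hit := integrable_part μ hint t
  have hiq := integrable_part μ hint q
  have hsub : g μ t - g μ q = ∫ y, (max (t - y) 0 - max (q - y) 0) ∂μ :=
    (integral_sub hit hiq).symm
  have hindq : Integrable ((Iic q).indicator fun _ => t - q) μ :=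
    (integrable_const (t - q)).indicator measurableSet_Iic
  have hindt : Integrable ((Iic t).indicator fun _ => t - q) μ :=
    (integrable_const (t - q)).indicator measurableSet_Iic
  have hIq : ∫ y, (Iic q).indicator (fun _ => t - q) y ∂μ = (t - q) * F μ q := by
    rw [integral_indicator_const _ measurableSet_Iic, smul_eq_mul, F, mul_comm]; rfl
  have hIt : ∫ y, (Iic t).indicator (fun _ => t - q) y ∂μ = (t - q) * F μ t := by
    rw [integral_indicator_const _ measurableSet_Iic, smul_eq_mul, F, mul_comm]; rfl
  constructor
  · rw [hsub, ← hIq]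
    refine integral_mono hindq (hit.sub hiq) ?_
    intro y
    simp only [Set.indicator_apply, Set.mem_Iic]
    split_ifs with h1
    · rw [max_eq_left (by linarith), max_eq_left (by linarith)]; linarith
    · push_neg at h1
      rw [max_eq_right (show q - y ≤ (0:ℝ) by linarith)]
      simpa using le_max_right (t - y) (0 : ℝ)
  · rw [hsub, ← hIt]
    refine integral_mono (hit.sub hiq) hindt ?_
    intro y
    simp only [Set.indicator_apply, Set.mem_Iic]
    split_ifs with h1
    · rw [max_eq_left (by linarith)]
      have : q - y ≤ max (q - y) 0 := le_max_left _ _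
      linarith
    · push_neg at h1
      rw [max_eq_right (by linarith), max_eq_right (by linarith)]; linarith

lemma hasDerivAt_g (μ : Measure ℝ) [IsProbabilityMeasure μ]
    (hatoms : ∀ x : ℝ, μ {x} = 0)
    (hint : Integrable (fun x : ℝ => x) μ) (q : ℝ) :
    HasDerivAt (g μ) (F μ q) q := by
  rw [hasDerivAt_iff_tendsto_slope]
  have hbound : ∀ t : ℝ, t ≠ q → ‖slope (g μ) q t - F μ q‖ ≤ ‖F μ t - F μ q‖ := by
    intro t ht
    rcases lt_or_gt_of_ne ht with hlt | hgt
    · obtain ⟨h1, h2⟩ := g_diff_bounds μ hint hlt.le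
      have hs : slope (g μ) q t = (g μ q - g μ t) / (q - t) := by
        rw [slope_def_field, div_eq_div_iff (by linarith) (by linarith)]; ring
      have hqt : (0:ℝ) < q - t := by linarith
      have hFle : F μ t ≤ F μ q := F_mono μ hlt.le
      have hlow : F μ t ≤ slope (g μ) q t := by
        rw [hs, le_div_iff₀ hqt]; nlinarith
      have hup : slope (g μ) q t ≤ F μ q := by
        rw [hs, div_le_iff₀ hqt]; nlinarith
      rw [Real.norm_eq_abs, Real.norm_eq_abs, abs_of_nonpos (by linarith),
        abs_of_nonpos (by linarith)]
      linarith
    · obtain ⟨h1, h2⟩ := g_diff_bounds μ hint hgt.le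
      have hs : slope (g μ) q t = (g μ t - g μ q) / (t - q) := slope_def_field _ _ _
      have hqt : (0:ℝ) < t - q := by linarith
      have hFle : F μ q ≤ F μ t := F_mono μ hgt.le
      have hlow : F μ q ≤ slope (g μ) q t := by
        rw [hs, le_div_iff₀ hqt]; nlinarith
      have hup : slope (g μ) q t ≤ F μ t := by
        rw [hs, div_le_iff₀ hqt]; nlinarith
      rw [Real.norm_eq_abs, Real.norm_eq_abs, abs_of_nonneg (by linarith),
        abs_of_nonneg (by linarith)]
      linarith
  have hcont : Tendsto (fun t => ‖F μ t - F μ q‖) (𝓝[≠] q) (𝓝 0) := by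
    have h0 : Tendsto (fun t => F μ t - F μ q) (𝓝 q) (𝓝 0) := by
      have h := (continuousAt_F μ hatoms q).tendsto.sub (tendsto_const_nhds (x := F μ q))
      simpa using h
    exact (by simpa using h0.norm : Tendsto (fun t => ‖F μ t - F μ q‖) (𝓝 q) (𝓝 0)).mono_left
      nhdsWithin_le_nhds
  have hmain : Tendsto (fun t => slope (g μ) q t - F μ q) (𝓝[≠] q) (𝓝 0) := by
    apply squeeze_zero_norm' _ hcont
    filter_upwards [self_mem_nhdsWithin] with t ht
    exact hbound t ht
  have := hmain.add (tendsto_const_nhds (x := F μ q))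
  simpa using this

end FZ0Aux

/-- For a nonatomic probability measure `μ` with integrable identity, fixed
`α ∈ (0,1)` and `e < 0`, the map `s ↦ ∫ ρ_α(y,s,e) dμ(y)` is differentiable at
every `q` with derivative `-(1/(α·e))·(F(q) - α)`, where `F(q) = μ((-∞,q])`. -/
theorem expected_fz0_hasDerivAt_q (μ : Measure ℝ) [IsProbabilityMeasure μ]
    (hatoms : ∀ x : ℝ, μ {x} = 0)
    (hint : Integrable (fun x : ℝ => x) μ)
    (α : ℝ) (hα : α ∈ Set.Ioo (0 : ℝ) 1) (e : ℝ) (he : e < 0) (q : ℝ) :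
    HasDerivAt (fun s => ∫ y, rho α y s e ∂μ)
      (-(1 / (α * e)) * ((μ (Set.Iic q)).toReal - α)) q := by
  obtain ⟨hα0, hα1⟩ := hα
  have he' : e ≠ 0 := ne_of_lt he
  have hα' : α ≠ 0 := ne_of_gt hα0
  -- rewrite the integral in closed form
  have hkey : ∀ s : ℝ, (∫ y, rho α y s e ∂μ)
      = (-(1 / e) * (e - s) + Real.log (-e)) + (-(1 / (e * α))) * FZ0Aux.g μ s := by
    intro s
    have hrho : ∀ y : ℝ, rho α y s e
        = (-(1 / e) * (e - s) + Real.log (-e)) + (-(1 / (e * α))) * max (s - y) 0 := by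
      intro y
      have hmax : (s - y) * (if y ≤ s then 1 else 0) = max (s - y) 0 := by
        split_ifs with h
        · rw [max_eq_left (by linarith)]; ring
        · rw [max_eq_right (by linarith)]; ring
      unfold rho
      rw [hmax]
      ring
    simp_rw [hrho]
    rw [integral_add (integrable_const _)
      ((FZ0Aux.integrable_part μ hint s).const_mul _), integral_const,
      integral_const_mul]
    simp [FZ0Aux.g]
  have hg := FZ0Aux.hasDerivAt_g μ hatoms hint q
  have h1 : HasDerivAt (fun s : ℝ => -(1 / e) * (e - s) + Real.log (-e)) (1 / e) q := by
    have : HasDerivAt (fun s : ℝ => e - s) (-1) q := by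
      simpa using (hasDerivAt_id q).const_sub e
    have := (this.const_mul (-(1 / e))).add_const (Real.log (-e))
    exact this.congr_deriv (by ring)
  have h2 := h1.add (hg.const_mul (-(1 / (e * α))))
  have heq : (fun s => ∫ y, rho α y s e ∂μ)
      = fun s => (-(1 / e) * (e - s) + Real.log (-e)) + (-(1 / (e * α))) * FZ0Aux.g μ s := by
    funext s; exact hkey s
  rw [heq]
  refine h2.congr_deriv ?_
  rw [FZ0Aux.F]
  field_simp
  ring
end

section
/- Let μ be a probability measure on ℝ with no atoms such that the identity function is μ-integrable. Fix α ∈ (0,1). Let q* ∈ ℝ satisfy F(q*) = α, where F(q) := μ((−∞,q]), and define e* := α^{-1}·∫_{(−∞,q*]} y dμ(y); assume e* < 0. Then the expected FZ0 loss has a vanishing gradient at (q*, e*): the partial derivative of (q,e) ↦ ∫ ρ_α(y,q,e) dμ(y) with respect to q at (q*, e*) exists and equals 0, and the partial derivative with respect to e at (q*, e*) exists and equals 0. -/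
open MeasureTheory

/-- Auxiliary: the "expected shortfall primitive" `q ↦ ∫ (q - y)⁺ dμ`. -/
noncomputable def Afun (μ : Measure ℝ) (q : ℝ) : ℝ :=
  ∫ y, (Set.Iic q).indicator (fun z => q - z) y ∂μ

lemma fz_pointwise_bound (q x y : ℝ) :
    |(Set.Iic x).indicator (fun z => x - z) y - (Set.Iic q).indicator (fun z => q - z) y
      - (x - q) * (Set.Iic q).indicator (fun _ => (1:ℝ)) y|
      ≤ |x - q| * (Set.Ioc (min q x) (max q x)).indicator (fun _ => (1:ℝ)) y := by
  rcases le_total q x with h | h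
  · rw [min_eq_left h, max_eq_right h, abs_of_nonneg (sub_nonneg.2 h)]
    rcases le_or_gt y q with h1 | h1
    · rw [Set.indicator_of_mem (Set.mem_Iic.2 h1), Set.indicator_of_mem (Set.mem_Iic.2 (h1.trans h)),
        Set.indicator_of_mem (Set.mem_Iic.2 h1)]
      have : x - y - (q - y) - (x - q) * 1 = 0 := by ring
      rw [this, abs_zero]
      exact mul_nonneg (by linarith) (Set.indicator_nonneg (fun _ _ => zero_le_one) y)
    · rcases le_or_gt y x with h2 | h2
      · rw [Set.indicator_of_mem (Set.mem_Iic.2 h2),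
          Set.indicator_of_notMem (by simpa using h1),
          Set.indicator_of_notMem (by simpa using h1),
          Set.indicator_of_mem (Set.mem_Ioc.2 ⟨h1, h2⟩)]
        have : x - y - 0 - (x - q) * 0 = x - y := by ring
        rw [this, abs_of_nonneg (by linarith), mul_one]
        linarith
      · rw [Set.indicator_of_notMem (by simpa using h2),
          Set.indicator_of_notMem (by simpa using h1),
          Set.indicator_of_notMem (by simpa using h1),
          Set.indicator_of_notMem (by simp [Set.mem_Ioc]; intro _; linarith)]
        simp
  · rw [min_eq_right h, max_eq_left h, abs_of_nonpos (sub_nonpos.2 h)]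
    rcases le_or_gt y x with h1 | h1
    · rw [Set.indicator_of_mem (Set.mem_Iic.2 h1), Set.indicator_of_mem (Set.mem_Iic.2 (h1.trans h)),
        Set.indicator_of_mem (Set.mem_Iic.2 (h1.trans h))]
      have : x - y - (q - y) - (x - q) * 1 = 0 := by ring
      rw [this, abs_zero]
      exact mul_nonneg (by linarith) (Set.indicator_nonneg (fun _ _ => zero_le_one) y)
    · rcases le_or_gt y q with h2 | h2
      · rw [Set.indicator_of_notMem (by simpa using h1),
          Set.indicator_of_mem (Set.mem_Iic.2 h2),
          Set.indicator_of_mem (Set.mem_Iic.2 h2),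
          Set.indicator_of_mem (Set.mem_Ioc.2 ⟨h1, h2⟩)]
        have : (0:ℝ) - (q - y) - (x - q) * 1 = y - x := by ring
        rw [this, abs_of_nonneg (by linarith), mul_one]
        linarith
      · rw [Set.indicator_of_notMem (by simpa using h1),
          Set.indicator_of_notMem (by simpa using h2),
          Set.indicator_of_notMem (by simpa using h2),
          Set.indicator_of_notMem (by simp [Set.mem_Ioc]; intro _; linarith)]
        simp

/-- At the true α-quantile `q*` (with `F(q*) = α`) and the true Expected
Shortfall `e* = α⁻¹·∫_{(-∞,q*]} y dμ(y) < 0`, the expected FZ0 loss has a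
vanishing gradient: both partial derivatives exist and equal `0`. -/
theorem expected_fz0_gradient_vanishes (μ : Measure ℝ) [IsProbabilityMeasure μ]
    (hatoms : ∀ x : ℝ, μ {x} = 0)
    (hint : Integrable (fun x : ℝ => x) μ)
    (α : ℝ) (hα : α ∈ Set.Ioo (0 : ℝ) 1)
    (qstar : ℝ) (hq : (μ (Set.Iic qstar)).toReal = α)
    (estar : ℝ) (he_def : estar = α⁻¹ * ∫ y in Set.Iic qstar, y ∂μ)
    (he : estar < 0) :
    HasDerivAt (fun s => ∫ y, rho α y s estar ∂μ) 0 qstar ∧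
    HasDerivAt (fun t => ∫ y, rho α y qstar t ∂μ) 0 estar := by
  obtain ⟨hα0, hα1⟩ := hα
  have hαne : α ≠ 0 := ne_of_gt hα0
  have hene : estar ≠ 0 := ne_of_lt he
  have hind_int : ∀ q : ℝ, Integrable ((Set.Iic q).indicator (fun z => q - z)) μ :=
    fun q => ((integrable_const q).sub hint).indicator measurableSet_Iic
  have hrho_eq : ∀ q e y : ℝ, rho α y q e
      = (-(1 / e) * (e - q) + Real.log (-e))
        + (-(1 / e) * (1 / α)) * (Set.Iic q).indicator (fun z => q - z) y := by
    intro q e y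
    by_cases h : y ≤ q <;>
      simp only [rho, Set.indicator_apply, Set.mem_Iic, h, if_true, if_false] <;> ring
  have hint_eq : ∀ q e : ℝ, ∫ y, rho α y q e ∂μ
      = (-(1 / e) * (e - q) + Real.log (-e)) + (-(1 / e) * (1 / α)) * Afun μ q := by
    intro q e
    simp_rw [hrho_eq q e]
    rw [integral_add (integrable_const _) ((hind_int q).const_mul _),
      integral_const, integral_const_mul]
    simp [Afun]
  -- value of Afun at qstar
  have hI : ∫ y in Set.Iic qstar, y ∂μ = α * estar := by
    rw [he_def]; field_simp
  have hAq : Afun μ qstar = α * (qstar - estar) := by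
    rw [Afun, integral_indicator measurableSet_Iic,
      integral_sub (integrable_const qstar).integrableOn hint.integrableOn,
      setIntegral_const, hI, measureReal_def, hq, smul_eq_mul]
    ring
  -- key bound on increments of Afun
  have hone : Integrable ((Set.Iic qstar).indicator (fun _ : ℝ => (1:ℝ))) μ :=
    (integrable_const 1).indicator measurableSet_Iic
  have hbound : ∀ x : ℝ, |Afun μ x - Afun μ qstar - (x - qstar) * α|
      ≤ |x - qstar| * (μ (Set.Ioc (min qstar x) (max qstar x))).toReal := by
    intro x
    have hInt1 : Integrable (fun y => (Set.Iic x).indicator (fun z => x - z) y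
        - (Set.Iic qstar).indicator (fun z => qstar - z) y
        - (x - qstar) * (Set.Iic qstar).indicator (fun _ => (1:ℝ)) y) μ :=
      (((hind_int x).sub (hind_int qstar))).sub (hone.const_mul _)
    have hsum : Afun μ x - Afun μ qstar - (x - qstar) * α
        = ∫ y, ((Set.Iic x).indicator (fun z => x - z) y
            - (Set.Iic qstar).indicator (fun z => qstar - z) y
            - (x - qstar) * (Set.Iic qstar).indicator (fun _ => (1:ℝ)) y) ∂μ := by
      have hfg : Integrable (fun y => (Set.Iic x).indicator (fun z => x - z) y
          - (Set.Iic qstar).indicator (fun z => qstar - z) y) μ :=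
        (hind_int x).sub (hind_int qstar)
      have hh : Integrable (fun y => (x - qstar) * (Set.Iic qstar).indicator (fun _ => (1:ℝ)) y) μ :=
        hone.const_mul _
      rw [integral_sub hfg hh, integral_sub (hind_int x) (hind_int qstar), integral_const_mul,
        integral_indicator_const (1:ℝ) measurableSet_Iic, measureReal_def, hq, smul_eq_mul, mul_one]
      rfl
    rw [hsum]
    calc |∫ y, ((Set.Iic x).indicator (fun z => x - z) y
            - (Set.Iic qstar).indicator (fun z => qstar - z) y
            - (x - qstar) * (Set.Iic qstar).indicator (fun _ => (1:ℝ)) y) ∂μ|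
        ≤ ∫ y, |(Set.Iic x).indicator (fun z => x - z) y
            - (Set.Iic qstar).indicator (fun z => qstar - z) y
            - (x - qstar) * (Set.Iic qstar).indicator (fun _ => (1:ℝ)) y| ∂μ := by
          simpa only [Real.norm_eq_abs] using norm_integral_le_integral_norm
            (fun y => (Set.Iic x).indicator (fun z => x - z) y
              - (Set.Iic qstar).indicator (fun z => qstar - z) y
              - (x - qstar) * (Set.Iic qstar).indicator (fun _ => (1:ℝ)) y)
      _ ≤ ∫ y, |x - qstar| * (Set.Ioc (min qstar x) (max qstar x)).indicator (fun _ => (1:ℝ)) y ∂μ := by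
          refine integral_mono hInt1.abs (((integrable_const 1).indicator measurableSet_Ioc).const_mul _) ?_
          intro y
          exact fz_pointwise_bound qstar x y
      _ = |x - qstar| * (μ (Set.Ioc (min qstar x) (max qstar x))).toReal := by
          rw [integral_const_mul, integral_indicator_const (1:ℝ) measurableSet_Ioc,
            smul_eq_mul, mul_one, measureReal_def]
  -- the measure of small intervals around qstar is eventually small
  have hsmall : ∀ c : ℝ, 0 < c → ∀ᶠ x in nhds qstar,
      (μ (Set.Ioc (min qstar x) (max qstar x))).toReal ≤ c := by
    intro c hc
    have hmono : Antitone (fun n : ℕ => Set.Ioc (qstar - 1/(n+1)) (qstar + 1/(n+1))) := by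
      intro m n hmn
      have h1 : (1:ℝ)/(n+1) ≤ 1/(m+1) := by
        apply one_div_le_one_div_of_le (by positivity)
        exact_mod_cast Nat.succ_le_succ hmn
      exact Set.Ioc_subset_Ioc (by linarith) (by linarith)
    have hseq : Filter.Tendsto (fun n : ℕ => μ (Set.Ioc (qstar - 1/(n+1)) (qstar + 1/(n+1))))
        Filter.atTop (nhds (μ (⋂ n : ℕ, Set.Ioc (qstar - 1/(n+1)) (qstar + 1/(n+1))))) :=
      tendsto_measure_iInter_atTop (fun n => measurableSet_Ioc.nullMeasurableSet) hmono
        ⟨0, measure_ne_top μ _⟩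
    have hiInter : (⋂ n : ℕ, Set.Ioc (qstar - 1/(n+1)) (qstar + 1/(n+1))) = {qstar} := by
      ext y
      simp only [Set.mem_iInter, Set.mem_Ioc, Set.mem_singleton_iff]
      constructor
      · intro h
        have hle : y ≤ qstar := by
          by_contra hlt
          push_neg at hlt
          obtain ⟨n, hn⟩ := exists_nat_one_div_lt (sub_pos.2 hlt)
          exact absurd ((h n).2) (by push_neg; linarith)
        have hge : qstar ≤ y := by
          by_contra hlt
          push_neg at hlt
          obtain ⟨n, hn⟩ := exists_nat_one_div_lt (sub_pos.2 hlt)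
          exact absurd ((h n).1) (by push_neg; linarith)
        linarith
      · rintro rfl n
        have hδ : (0:ℝ) < 1/(n+1) := by positivity
        constructor <;> linarith
    rw [hiInter, hatoms qstar] at hseq
    have htoReal : Filter.Tendsto
        (fun n : ℕ => (μ (Set.Ioc (qstar - 1/(n+1)) (qstar + 1/(n+1)))).toReal)
        Filter.atTop (nhds 0) := by
      have := (ENNReal.tendsto_toReal (by simp : (0:ENNReal) ≠ ⊤)).comp hseq
      simpa [Function.comp_def] using this
    obtain ⟨n, hn⟩ := (htoReal.eventually_lt_const hc).exists
    have hδ : (0:ℝ) < 1/(n+1) := by positivity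
    filter_upwards [Metric.ball_mem_nhds qstar hδ] with x hx
    rw [Metric.mem_ball, Real.dist_eq, abs_sub_lt_iff] at hx
    refine le_trans (ENNReal.toReal_mono (measure_ne_top μ _)
      (measure_mono (Set.Ioc_subset_Ioc ?_ ?_))) hn.le
    · refine le_min (by linarith) (by linarith [hx.2])
    · refine max_le (by linarith) (by linarith [hx.1])
  -- derivative of Afun at qstar
  have hA' : HasDerivAt (Afun μ) α qstar := by
    rw [hasDerivAt_iff_isLittleO, Asymptotics.isLittleO_iff]
    intro c hc
    filter_upwards [hsmall c hc] with x hx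
    rw [Real.norm_eq_abs, Real.norm_eq_abs, smul_eq_mul]
    calc |Afun μ x - Afun μ qstar - (x - qstar) * α|
        ≤ |x - qstar| * (μ (Set.Ioc (min qstar x) (max qstar x))).toReal := hbound x
      _ ≤ |x - qstar| * c := mul_le_mul_of_nonneg_left hx (abs_nonneg _)
      _ = c * |x - qstar| := mul_comm _ _
  constructor
  · have hfe : (fun s => ∫ y, rho α y s estar ∂μ)
        = fun s => (-(1 / estar) * (estar - s) + Real.log (-estar))
          + (-(1 / estar) * (1 / α)) * Afun μ s :=
      funext fun s => hint_eq s estar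
    rw [hfe]
    have h1 : HasDerivAt (fun s : ℝ => -(1 / estar) * (estar - s) + Real.log (-estar))
        (-(1 / estar) * (-1)) qstar :=
      (((hasDerivAt_id' qstar).const_sub estar).const_mul (-(1 / estar))).add_const _
    have h2 : HasDerivAt (fun s : ℝ => (-(1 / estar) * (1 / α)) * Afun μ s)
        ((-(1 / estar) * (1 / α)) * α) qstar := hA'.const_mul _
    have h3 := h1.add h2
    refine h3.congr_deriv ?_
    field_simp
    ring
  · have hfe : (fun t => ∫ y, rho α y qstar t ∂μ)
        = fun t => (-(1 / t) * (t - qstar) + Real.log (-t))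
          + (-(1 / t) * (1 / α)) * Afun μ qstar :=
      funext fun t => hint_eq qstar t
    rw [hfe]
    have hinv : HasDerivAt (fun t : ℝ => 1 / t) (-(estar ^ 2)⁻¹) estar := by
      simpa only [one_div] using hasDerivAt_inv hene
    have hneg : HasDerivAt (fun t : ℝ => -t) (-1) estar := hasDerivAt_neg estar
    have hlog : HasDerivAt (fun t : ℝ => Real.log (-t)) (-1 / -estar) estar :=
      hneg.log (by simpa using hene)
    have h1 : HasDerivAt (fun t : ℝ => -(1 / t) * (t - qstar))
        (-(-(estar ^ 2)⁻¹) * (estar - qstar) + -(1 / estar) * 1) estar :=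
      hinv.neg.mul ((hasDerivAt_id' estar).sub_const qstar)
    have h2 : HasDerivAt (fun t : ℝ => (-(1 / t) * (1 / α)) * Afun μ qstar)
        (-(-(estar ^ 2)⁻¹) * (1 / α) * Afun μ qstar) estar :=
      (hinv.neg.mul_const (1 / α)).mul_const (Afun μ qstar)
    have h3 := (h1.add hlog).add h2
    refine h3.congr_deriv ?_
    rw [hAq]
    field_simp
    ring
end

section
/- Let μ be a probability measure on ℝ such that the identity function is μ-integrable, let α ∈ (0,1), and let q ∈ ℝ satisfy μ((−∞,q]) = α. Define e* := α^{-1}·∫_{(−∞,q]} y dμ(y) and assume e* < 0. Then for every e < 0 with e ≠ e*, it holds that ∫ ρ_α(y, q, e*) dμ(y) < ∫ ρ_α(y, q, e) dμ(y); that is, with the Value at Risk q held fixed, the expected FZ0 loss as a function of the Expected Shortfall argument e on (−∞,0) is uniquely minimized at e = e*. -/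
open MeasureTheory

lemma integral_rho_eq (μ : Measure ℝ) [IsProbabilityMeasure μ]
    (hint : Integrable (fun x : ℝ => x) μ)
    (α : ℝ) (hα : 0 < α)
    (q : ℝ) (hq : μ (Set.Iic q) = ENNReal.ofReal α)
    (estar : ℝ) (he_def : estar = α⁻¹ * ∫ y in Set.Iic q, y ∂μ)
    (e : ℝ) (he : e ≠ 0) :
    ∫ y, rho α y q e ∂μ = estar / e + Real.log (-e) - 1 := by
  have hα' : α ≠ 0 := hα.ne'
  set I := ∫ y in Set.Iic q, y ∂μ with hI
  have hind : (fun y : ℝ => (q - y) * (if y ≤ q then 1 else 0)) =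
      (Set.Iic q).indicator (fun y => q - y) := by
    ext y
    by_cases h : y ≤ q <;> simp [Set.indicator, h]
  have hintc : Integrable (fun y : ℝ => q - y) μ :=
    (integrable_const q).sub hint
  have hindint : Integrable ((Set.Iic q).indicator (fun y : ℝ => q - y)) μ :=
    hintc.indicator measurableSet_Iic
  have hrho : ∀ y : ℝ, rho α y q e =
      (-(1 / e) * (e - q) + Real.log (-e)) +
        (-(1 / (e * α))) * ((Set.Iic q).indicator (fun y => q - y) y) := by
    intro y
    have h1 := congrFun hind y
    simp only [rho]
    rw [h1]
    generalize (Set.Iic q).indicator (fun y => q - y) y = v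
    field_simp
    ring
  have hmeas : (μ (Set.Iic q)).toReal = α := by
    rw [hq, ENNReal.toReal_ofReal hα.le]
  have hindval : ∫ y, (Set.Iic q).indicator (fun y => q - y) y ∂μ = q * α - I := by
    rw [integral_indicator measurableSet_Iic]
    rw [integral_sub (integrableOn_const (s := Set.Iic q) (C := q) (measure_lt_top μ _).ne) hint.integrableOn]
    simp [Measure.real, hmeas, mul_comm, hI]
  calc ∫ y, rho α y q e ∂μ
      = ∫ y, ((-(1 / e) * (e - q) + Real.log (-e)) +
          (-(1 / (e * α))) * ((Set.Iic q).indicator (fun y => q - y) y)) ∂μ := by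
        simp_rw [hrho]
    _ = (-(1 / e) * (e - q) + Real.log (-e)) +
          (-(1 / (e * α))) * (q * α - I) := by
        rw [integral_add (integrable_const _) (hindint.const_mul _), integral_const,
          integral_const_mul, hindval]
        simp
    _ = estar / e + Real.log (-e) - 1 := by
        have : I = α * estar := by rw [he_def]; field_simp
        rw [this]
        field_simp
        ring

/-- With the Value at Risk `q` held fixed (where `μ((-∞,q]) = α`), the expected
FZ0 loss, as a function of the ES argument `e` on `(-∞,0)`, is uniquely
minimized at the true Expected Shortfall `e* = α⁻¹·∫_{(-∞,q]} y dμ(y)`. -/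
theorem expected_fz0_unique_min_in_e (μ : Measure ℝ) [IsProbabilityMeasure μ]
    (hint : Integrable (fun x : ℝ => x) μ)
    (α : ℝ) (hα : α ∈ Set.Ioo (0 : ℝ) 1)
    (q : ℝ) (hq : μ (Set.Iic q) = ENNReal.ofReal α)
    (estar : ℝ) (he_def : estar = α⁻¹ * ∫ y in Set.Iic q, y ∂μ)
    (hneg : estar < 0) :
    ∀ e < (0 : ℝ), e ≠ estar →
      (∫ y, rho α y q estar ∂μ) < ∫ y, rho α y q e ∂μ := by
  intro e he hne
  rw [integral_rho_eq μ hint α hα.1 q hq estar he_def estar hneg.ne,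
      integral_rho_eq μ hint α hα.1 q hq estar he_def e he.ne]
  have hdiv : estar / estar = 1 := div_self hneg.ne
  rw [hdiv]
  have ht : 0 < estar / e := div_pos_of_neg_of_neg hneg he
  have ht1 : estar / e ≠ 1 := by
    intro h1
    rw [div_eq_one_iff_eq he.ne] at h1
    exact hne h1.symm
  have hlog : Real.log (estar / e) < estar / e - 1 :=
    Real.log_lt_sub_one_of_pos ht ht1
  have hlogeq : Real.log (estar / e) = Real.log (-estar) - Real.log (-e) := by
    rw [show estar / e = (-estar) / (-e) by ring_nf,
      Real.log_div (neg_ne_zero.2 hneg.ne) (neg_ne_zero.2 he.ne)]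
  linarith [hlog, hlogeq.symm.le]
end

section
/- Let α ∈ (0,1), let z_α := Q_α(γ) be the α-quantile of the standard Gaussian measure γ on ℝ, and let ξ_α := α^{-1}·∫_{(−∞,z_α]} x dγ(x) be the standard normal α-Expected Shortfall. Let q, e ∈ ℝ with e < q, and define m := q − z_α·(e − q)/(ξ_α − z_α) and s := (e − q)/(ξ_α − z_α). Then s > 0, and the Gaussian measure ν with mean m and variance s² satisfies Q_α(ν) = q and α^{-1}·∫_{(−∞,q]} y dν(y) = e. -/
open MeasureTheory ProbabilityTheory

/-- The α-quantile (Value at Risk at level α) of a measure on ℝ. -/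
noncomputable def Qa (α : ℝ) (ν : Measure ℝ) : ℝ :=
  sInf {x : ℝ | ENNReal.ofReal α ≤ ν (Set.Iic x)}

open Set Filter Topology Function
open scoped NNReal

/-- The quantile set in terms of the cdf. -/
lemma Qa_set_eq (α : ℝ) (μ : Measure ℝ) [IsProbabilityMeasure μ] :
    {x : ℝ | ENNReal.ofReal α ≤ μ (Set.Iic x)} = {x : ℝ | α ≤ cdf μ x} := by
  ext x
  rw [mem_setOf_eq, mem_setOf_eq, ← ofReal_cdf μ x,
    ENNReal.ofReal_le_ofReal_iff (cdf_nonneg μ x)]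

lemma cdf_Qa {μ : Measure ℝ} [IsProbabilityMeasure μ] {α : ℝ} (hα : α ∈ Set.Ioo (0:ℝ) 1)
    (h0 : μ {Qa α μ} = 0) : cdf μ (Qa α μ) = α := by
  have hQ : Qa α μ = sInf {x : ℝ | α ≤ cdf μ x} := by rw [Qa, Qa_set_eq]
  set S := {x : ℝ | α ≤ cdf μ x} with hS
  have hne : S.Nonempty := by
    have := (tendsto_cdf_atTop μ).eventually (eventually_gt_nhds hα.2)
    rcases this.exists with ⟨x, hx⟩
    exact ⟨x, hx.le⟩
  have hbdd : BddBelow S := by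
    have := (tendsto_cdf_atBot μ).eventually (eventually_lt_nhds hα.1)
    rcases this.exists with ⟨x₀, hx₀⟩
    refine ⟨x₀, fun y hy => ?_⟩
    by_contra h
    push_neg at h
    exact absurd (le_trans hy ((monotone_cdf μ) h.le)) (not_le.mpr hx₀)
  rw [hQ] at h0 ⊢
  set z := sInf S with hz
  have h1 : α ≤ cdf μ z := by
    have hright : Tendsto (cdf μ) (𝓝[>] z) (𝓝 (cdf μ z)) :=
      ((cdf μ).right_continuous z).tendsto.mono_left
        (nhdsWithin_mono z (Set.Ioi_subset_Ici le_rfl))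
    refine ge_of_tendsto hright ?_
    filter_upwards [self_mem_nhdsWithin] with y hy
    obtain ⟨x, hxS, hxy⟩ := (csInf_lt_iff hbdd hne).mp hy
    exact le_trans hxS ((monotone_cdf μ) hxy.le)
  have hmono : Monotone (cdf μ) := monotone_cdf μ
  have hleftLim : leftLim (cdf μ) z = cdf μ z := by
    have hsing : (cdf μ).measure {z} = 0 := by rw [measure_cdf]; exact h0
    rw [StieltjesFunction.measure_singleton] at hsing
    have h1' : cdf μ z - leftLim (cdf μ) z ≤ 0 := ENNReal.ofReal_eq_zero.mp hsing
    have h2' : leftLim (cdf μ) z ≤ cdf μ z := hmono.leftLim_le le_rfl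
    linarith
  have h2 : cdf μ z ≤ α := by
    rw [← hleftLim]
    refine le_of_tendsto (hmono.tendsto_leftLim z) ?_
    filter_upwards [self_mem_nhdsWithin] with y hy
    have : y ∉ S := notMem_of_lt_csInf hy hbdd
    rw [hS, mem_setOf_eq, not_le] at this
    exact this.le
  linarith

lemma gaussian_Iic_Qa {α : ℝ} (hα : α ∈ Set.Ioo (0:ℝ) 1) :
    (gaussianReal 0 1) (Set.Iic (Qa α (gaussianReal 0 1))) = ENNReal.ofReal α := by
  have h0 : (gaussianReal 0 1) {Qa α (gaussianReal 0 1)} = 0 :=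
    gaussianReal_absolutelyContinuous 0 one_ne_zero (measure_singleton _)
  rw [← ofReal_cdf, cdf_Qa hα h0]

lemma integrable_id_gaussian : Integrable (fun x : ℝ => x) (gaussianReal 0 1) := by
  rw [gaussianReal_of_var_ne_zero 0 one_ne_zero]
  rw [integrable_withDensity_iff (measurable_gaussianPDF 0 1)
    (Filter.Eventually.of_forall fun x => ENNReal.ofReal_lt_top)]
  have heq : (fun x : ℝ => x * ((gaussianPDF 0 1 x).toReal)) =
      fun x : ℝ => x * gaussianPDFReal 0 1 x := by
    funext x
    rw [gaussianPDF_def, ENNReal.toReal_ofReal (gaussianPDFReal_nonneg 0 1 x)]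
  rw [heq]
  have hfun : (fun x : ℝ => x * gaussianPDFReal 0 1 x) =
      fun x : ℝ => (Real.sqrt (2 * Real.pi * ((1:ℝ≥0):ℝ)))⁻¹ *
        (x ^ (1:ℝ) * Real.exp (-(1/2) * x ^ 2)) := by
    funext x
    rw [gaussianPDFReal, Real.rpow_one]
    have h : -(x - 0) ^ 2 / (2 * ((1:ℝ≥0):ℝ)) = -(1/2) * x ^ 2 := by
      push_cast; ring
    rw [h]; ring
  rw [hfun]
  exact (integrable_rpow_mul_exp_neg_mul_sq (b := 1/2) one_half_pos (s := 1)
    (by norm_num)).const_mul _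

lemma gaussian_affine_map {s m : ℝ} (hs : 0 < s) :
    gaussianReal m ((s ^ 2).toNNReal) =
      (gaussianReal 0 1).map (fun x => s * x + m) := by
  have h1 : (fun x : ℝ => s * x + m) = (fun x : ℝ => x + m) ∘ (fun x : ℝ => s * x) := rfl
  rw [h1, ← Measure.map_map (measurable_add_const m) (measurable_const_mul s)]
  rw [gaussianReal_map_const_mul s]
  have h2 : (NNReal.mk (s ^ 2) (sq_nonneg s) * 1 : ℝ≥0) = (s ^ 2).toNNReal := by
    ext
    simp [Real.toNNReal_of_nonneg (sq_nonneg s)]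
  rw [h2]
  rw [gaussianReal_map_add_const m]
  norm_num

lemma affine_preimage_Iic {s m : ℝ} (hs : 0 < s) (x : ℝ) :
    (fun y : ℝ => s * y + m) ⁻¹' (Set.Iic x) = Set.Iic ((x - m) / s) := by
  ext y
  simp only [Set.mem_preimage, Set.mem_Iic, le_div_iff₀ hs]
  constructor <;> intro h <;> linarith [mul_comm y s]

/-- Given VaR and ES forecasts `q > e`, the Gaussian distribution with mean
`m = q - z_α·(e-q)/(ξ_α-z_α)` and standard deviation `s = (e-q)/(ξ_α-z_α) > 0`
has α-quantile `q` and α-Expected Shortfall `e`, where `z_α` and `ξ_α` are the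
standard normal α-quantile and α-ES. -/
theorem gaussian_match_var_es (α : ℝ) (hα : α ∈ Set.Ioo (0 : ℝ) 1)
    (z ξ q e s m : ℝ)
    (hz : z = Qa α (gaussianReal 0 1))
    (hξ : ξ = α⁻¹ * ∫ x in Set.Iic z, x ∂(gaussianReal 0 1))
    (he : e < q)
    (hm : m = q - z * (e - q) / (ξ - z))
    (hs : s = (e - q) / (ξ - z)) :
    0 < s ∧
    Qa α (gaussianReal m ((s ^ 2).toNNReal)) = q ∧
    α⁻¹ * ∫ y in Set.Iic q, y ∂(gaussianReal m ((s ^ 2).toNNReal)) = e := by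
  have hγIic : (gaussianReal 0 1) (Set.Iic z) = ENNReal.ofReal α := by
    rw [hz]; exact gaussian_Iic_Qa hα
  have hαpos := hα.1
  -- ξ < z
  have hIz : ∫ x in Set.Iic z, x ∂(gaussianReal 0 1) < z * α := by
    have hint : IntegrableOn (fun x : ℝ => x) (Set.Iic z) (gaussianReal 0 1) :=
      integrable_id_gaussian.integrableOn
    have hconst : ∫ x in Set.Iic z, z ∂(gaussianReal 0 1) = z * α := by
      rw [setIntegral_const, measureReal_def, hγIic, ENNReal.toReal_ofReal hαpos.le, smul_eq_mul, mul_comm]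
    have hIio : (gaussianReal 0 1) (Set.Iio z) = ENNReal.ofReal α := by
      have h0 : (gaussianReal 0 1) {z} = 0 :=
        gaussianReal_absolutelyContinuous 0 one_ne_zero (measure_singleton _)
      have : Set.Iic z \ {z} = Set.Iio z := Set.Iic_diff_right
      rw [← this, measure_diff_null h0, hγIic]
    have hpos : 0 < ∫ x in Set.Iic z, (z - x) ∂(gaussianReal 0 1) := by
      rw [setIntegral_pos_iff_support_of_nonneg_ae]
      · have hsubset : Set.Iio z ⊆
            Function.support (fun x : ℝ => z - x) ∩ Set.Iic z := by
          intro x hx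
          have hxz : x < z := hx
          refine ⟨?_, le_of_lt hxz⟩
          simp only [Function.mem_support]
          intro habs
          have : z = x := sub_eq_zero.mp habs
          exact absurd this (ne_of_gt hxz)
        calc (0 : ENNReal) < (gaussianReal 0 1) (Set.Iio z) := by
              rw [hIio]; exact ENNReal.ofReal_pos.mpr hαpos
          _ ≤ _ := measure_mono hsubset
      · rw [EventuallyLE, ae_restrict_iff' measurableSet_Iic]
        filter_upwards with x hx
        rw [Set.mem_Iic] at hx
        simpa using sub_nonneg.mpr hx
      · exact (integrable_const z).integrableOn.sub hint
    have : ∫ x in Set.Iic z, (z - x) ∂(gaussianReal 0 1) =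
        z * α - ∫ x in Set.Iic z, x ∂(gaussianReal 0 1) := by
      rw [integral_sub (integrable_const z).integrableOn hint, hconst]
    linarith
  have hξz : ξ < z := by
    rw [hξ]
    have := mul_lt_mul_of_pos_left hIz (inv_pos.mpr hαpos)
    calc α⁻¹ * ∫ x in Set.Iic z, x ∂(gaussianReal 0 1) < α⁻¹ * (z * α) := this
      _ = z := by field_simp
  have hsub : ξ - z < 0 := by linarith
  have hspos : 0 < s := by
    rw [hs]
    exact div_pos_of_neg_of_neg (by linarith) hsub
  have hmq : m = q - z * s := by rw [hm, hs, mul_div_assoc]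
  have hqzm : s * z + m = q := by rw [hmq]; ring
  -- measure identity
  have hmap := gaussian_affine_map (m := m) hspos
  have hmeas : Measurable (fun x : ℝ => s * x + m) :=
    (measurable_id.const_mul s).add_const m
  have hq_pre : (q - m) / s = z := by
    rw [hmq]
    field_simp
    ring
  -- quantile
  have hQ : Qa α (gaussianReal m ((s ^ 2).toNNReal)) = q := by
    rw [Qa, hmap]
    have hsetS : {x : ℝ | ENNReal.ofReal α ≤ ((gaussianReal 0 1).map fun x => s * x + m) (Set.Iic x)}
        = (fun y : ℝ => s * y + m) '' {x : ℝ | ENNReal.ofReal α ≤ (gaussianReal 0 1) (Set.Iic x)} := by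
      ext x
      rw [Set.mem_setOf_eq, Measure.map_apply hmeas measurableSet_Iic,
        affine_preimage_Iic hspos]
      constructor
      · intro h
        exact ⟨(x - m) / s, h, by field_simp; ring⟩
      · rintro ⟨y, hy, rfl⟩
        have : (s * y + m - m) / s = y := by field_simp; ring
        rwa [this]
    rw [hsetS]
    set S := {x : ℝ | ENNReal.ofReal α ≤ (gaussianReal 0 1) (Set.Iic x)} with hSdef
    have hQa : Qa α (gaussianReal 0 1) = sInf S := rfl
    have hSne : S.Nonempty := by
      rw [hSdef, Qa_set_eq]
      have := (tendsto_cdf_atTop (gaussianReal 0 1)).eventually (eventually_gt_nhds hα.2)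
      rcases this.exists with ⟨x, hx⟩
      exact ⟨x, hx.le⟩
    have hSbdd : BddBelow S := by
      rw [hSdef, Qa_set_eq]
      have := (tendsto_cdf_atBot (gaussianReal 0 1)).eventually (eventually_lt_nhds hα.1)
      rcases this.exists with ⟨x₀, hx₀⟩
      refine ⟨x₀, fun y hy => ?_⟩
      by_contra h
      push_neg at h
      exact absurd (le_trans hy ((monotone_cdf _) h.le)) (not_le.mpr hx₀)
    have hiso : ∀ T : Set ℝ, T.Nonempty → BddBelow T →
        sInf ((fun y : ℝ => s * y + m) '' T) = s * sInf T + m := by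
      intro T hTne hTbdd
      let eiso : ℝ ≃o ℝ := (OrderIso.mulLeft₀ s hspos).trans
        (OrderIso.addRight m)
      have : (fun y : ℝ => s * y + m) = eiso := rfl
      rw [this, ← OrderIso.map_csInf' eiso hTne hTbdd]
      rfl
    rw [hiso S hSne hSbdd, ← hQa, ← hz, hqzm]
  refine ⟨hspos, hQ, ?_⟩
  -- ES
  have hintId : IntegrableOn (fun x : ℝ => x) (Set.Iic z) (gaussianReal 0 1) :=
    integrable_id_gaussian.integrableOn
  have hESint : ∫ y in Set.Iic q, y ∂(gaussianReal m ((s ^ 2).toNNReal)) =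
      ∫ x in Set.Iic z, (s * x + m) ∂(gaussianReal 0 1) := by
    rw [hmap, setIntegral_map (f := fun y : ℝ => y) measurableSet_Iic
      measurable_id.aestronglyMeasurable hmeas.aemeasurable,
      affine_preimage_Iic hspos, hq_pre]
  have hlin : ∫ x in Set.Iic z, (s * x + m) ∂(gaussianReal 0 1) =
      s * (∫ x in Set.Iic z, x ∂(gaussianReal 0 1)) + m * α := by
    rw [integral_add (hintId.const_mul s) (integrable_const m).integrableOn,
      integral_const_mul, setIntegral_const, measureReal_def, hγIic,
      ENNReal.toReal_ofReal hαpos.le, smul_eq_mul, mul_comm α m]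
  have hIval : ∫ x in Set.Iic z, x ∂(gaussianReal 0 1) = α * ξ := by
    rw [hξ]
    field_simp
  rw [hESint, hlin, hIval, hmq]
  have hαne : α ≠ 0 := ne_of_gt hαpos
  field_simp
  ring_nf
  have hξzne : ξ - z ≠ 0 := ne_of_lt hsub
  rw [hs]
  field_simp
  ring
end
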